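/- Let E ∈ M_n(ℝ) be tropically idempotent with all diagonal entries equal to 0. Then the tropical column space C(E) is min-plus convex: for any x, y ∈ C(E), the componentwise minimum z (z_i = min(x_i, y_i)) also lies in C(E). -/

import Mathlib

open Finset

noncomputable def tmul {n : ℕ} [NeZero n] (A B : Matrix (Fin n) (Fin n) ℝ) :
    Matrix (Fin n) (Fin n) ℝ :=
  fun i j => univ.sup' univ_nonempty (fun k => A i k + B k j)

noncomputable def tvec {n : ℕ} [NeZero n] (A : Matrix (Fin n) (Fin n) ℝ) (x : Fin n → ℝ) :
    Fin n → ℝ :=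
  fun i => univ.sup' univ_nonempty (fun k => A i k + x k)

theorem idempotent_zero_diag_minplus_convex {n : ℕ} [NeZero n]
    (E : Matrix (Fin n) (Fin n) ℝ) (hE : tmul E E = E)
    (hdiag : ∀ i, E i i = 0)
    (x y : Fin n → ℝ) (hx : tvec E x = x) (hy : tvec E y = y) :
    tvec E (fun i => min (x i) (y i)) = fun i => min (x i) (y i) := by
  funext i
  show univ.sup' univ_nonempty (fun k => E i k + min (x k) (y k)) = min (x i) (y i)
  apply le_antisymm
  · apply Finset.sup'_le
    intro k _
    have hxk : E i k + x k ≤ x i := by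
      conv_rhs => rw [← hx]
      exact Finset.le_sup' (fun k => E i k + x k) (Finset.mem_univ k)
    have hyk : E i k + y k ≤ y i := by
      conv_rhs => rw [← hy]
      exact Finset.le_sup' (fun k => E i k + y k) (Finset.mem_univ k)
    exact le_min (le_trans (add_le_add_right (min_le_left _ _) _) hxk)
      (le_trans (add_le_add_right (min_le_right _ _) _) hyk)
  · have := Finset.le_sup' (fun k => E i k + min (x k) (y k)) (Finset.mem_univ i)
    simp only [hdiag i, zero_add] at this
    exact this
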